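/- arXiv:2409.09167 — 4 statements merged into one kernel-verified Lean document; each statement's English description precedes it below -/
import Mathlib

section
/- The group G₇₂ = (ℤ/3ℤ)² ⋊ Q₈ satisfies the unique intersection number condition: for every pair of distinct conjugacy classes C_h ≠ C_i of G₇₂ there is exactly one conjugacy class C_j with C_h ∩ C_iC_j ≠ ∅. -/
open Pointwise

/-- A group `G` satisfies the *unique intersection number condition* (condition (3) of
Tanaka's theorem, equivalent to the Terwilliger algebra of the group association scheme of `G`
being almost commutative) if for every pair of distinct conjugacy classes `Ch ≠ Ci` of `G`
there is exactly one conjugacy class `Cj` with `Ch ∩ (Ci * Cj) ≠ ∅`. -/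
def UniqueIntersectionNumberCondition (G : Type*) [Group G] : Prop :=
  ∀ Ch Ci : ConjClasses G, Ch ≠ Ci →
    ∃! Cj : ConjClasses G, (Ch.carrier ∩ (Ci.carrier * Cj.carrier)).Nonempty

instance (A : Type*) [Add A] : Group (AddAut A) where
  mul g h := AddEquiv.trans h g
  one := AddEquiv.refl _
  inv := AddEquiv.symm
  mul_assoc _ _ _ := rfl
  one_mul _ := rfl
  mul_one _ := rfl
  inv_mul_cancel := AddEquiv.self_trans_symm

/-- The canonical homomorphism from additive automorphisms of `A` to multiplicative
automorphisms of `Multiplicative A`. -/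
def addAutToMulAut (A : Type*) [AddGroup A] : AddAut A →* MulAut (Multiplicative A) where
  toFun f := AddEquiv.toMultiplicative f
  map_one' := rfl
  map_mul' _ _ := rfl

/-- The additive automorphism `(u,v) ↦ (u - v, -u - v)` of `(ℤ/3ℤ)²`, by which the
generator `a` of `Q₈` acts. -/
def qa : AddAut (ZMod 3 × ZMod 3) where
  toFun p := (p.1 - p.2, -p.1 - p.2)
  invFun p := (p.2 - p.1, p.1 + p.2)
  left_inv := by decide
  right_inv := by decide
  map_add' := by decide

/-- The additive automorphism `(u,v) ↦ (-v, u)` of `(ℤ/3ℤ)²`, by which the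
generator `b = xa 0` of `Q₈` acts. -/
def qb : AddAut (ZMod 3 × ZMod 3) where
  toFun p := (-p.2, p.1)
  invFun p := (p.2, -p.1)
  left_inv := by decide
  right_inv := by decide
  map_add' := by decide

instance : DecidableEq (AddAut (ZMod 3 × ZMod 3)) := fun f g =>
  decidable_of_iff (∀ x, f x = g x) ⟨fun h => AddEquiv.ext h, fun h x => by rw [h]⟩

/-- The fixed-point-free action of the quaternion group `Q₈ = QuaternionGroup 2` on
`(ℤ/3ℤ)²`: the generator `a = QuaternionGroup.a 1` acts by `(u,v) ↦ (u - v, -u - v)` and the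
generator `b = QuaternionGroup.xa 0` acts by `(u,v) ↦ (-v, u)`. -/
def q8AddAction : QuaternionGroup 2 →* AddAut (ZMod 3 × ZMod 3) where
  toFun g := match g with
    | .a i => qa ^ i.val
    | .xa i => qb * qa ^ i.val
  map_one' := by decide
  map_mul' := by decide

/-- The action of `Q₈` on `(ℤ/3ℤ)²`, written multiplicatively. -/
def q8Action : QuaternionGroup 2 →* MulAut (Multiplicative (ZMod 3 × ZMod 3)) :=
  (addAutToMulAut _).comp q8AddAction

/-- The Frobenius group `G₇₂ = (ℤ/3ℤ)² ⋊ Q₈` of order 72. -/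
def G72 : Type :=
  SemidirectProduct (Multiplicative (ZMod 3 × ZMod 3)) (QuaternionGroup 2) q8Action

instance : Group G72 :=
  inferInstanceAs (Group (SemidirectProduct (Multiplicative (ZMod 3 × ZMod 3))
    (QuaternionGroup 2) q8Action))


/-! ### Auxiliary material for the proof -/

instance : DecidableEq G72 := fun x y =>
  decidable_of_iff (x.left = y.left ∧ x.right = y.right)
    ⟨fun ⟨h1, h2⟩ => SemidirectProduct.ext h1 h2, fun h => by subst h; exact ⟨rfl, rfl⟩⟩

def g72Equiv : G72 ≃ Multiplicative (ZMod 3 × ZMod 3) × QuaternionGroup 2 where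
  toFun x := (x.left, x.right)
  invFun p := ⟨p.1, p.2⟩
  left_inv _ := rfl
  right_inv _ := rfl

instance : Fintype G72 := Fintype.ofEquiv _ g72Equiv.symm

instance (a b : G72) : Decidable (IsConj a b) :=
  decidable_of_iff (∃ c : G72, c * a * c⁻¹ = b) isConj_iff.symm

/-- An element of `G72` from explicit coordinates. -/
def g (u v : ℕ) (t : Bool) (i : ℕ) : G72 :=
  ⟨Multiplicative.ofAdd ((u : ZMod 3), (v : ZMod 3)),
    if t then QuaternionGroup.xa (i : ZMod 4) else QuaternionGroup.a (i : ZMod 4)⟩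

def reps : List (G72 × List G72) := [
  (g 0 0 false 0, [g 0 0 false 0]),
  (g 0 0 false 1, [g 0 0 false 1, g 0 0 false 3, g 1 2 false 1, g 2 0 false 3, g 2 1 false 1, g 1 0 false 3, g 0 1 false 1, g 2 2 false 3, g 1 0 false 1, g 1 2 false 3, g 2 2 false 1, g 0 2 false 3, g 0 2 false 1, g 1 1 false 3, g 1 1 false 1, g 0 1 false 3, g 2 0 false 1, g 2 1 false 3]),
  (g 0 0 false 2, [g 0 0 false 2, g 0 2 false 2, g 0 1 false 2, g 2 0 false 2, g 2 2 false 2, g 2 1 false 2, g 1 0 false 2, g 1 2 false 2, g 1 1 false 2]),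
  (g 0 0 true 0, [g 0 0 true 0, g 0 0 true 2, g 1 1 true 0, g 2 1 true 2, g 2 2 true 0, g 1 2 true 2, g 1 2 true 0, g 1 1 true 2, g 2 0 true 0, g 0 2 true 2, g 0 1 true 0, g 2 0 true 2, g 2 1 true 0, g 2 2 true 2, g 0 2 true 0, g 1 0 true 2, g 1 0 true 0, g 0 1 true 2]),
  (g 0 0 true 1, [g 0 0 true 1, g 0 0 true 3, g 2 2 true 1, g 1 0 true 3, g 1 1 true 1, g 2 0 true 3, g 0 2 true 1, g 2 1 true 3, g 2 1 true 1, g 0 1 true 3, g 1 0 true 1, g 1 1 true 3, g 0 1 true 1, g 1 2 true 3, g 2 0 true 1, g 2 2 true 3, g 1 2 true 1, g 0 2 true 3]),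
  (g 0 1 false 0, [g 0 1 false 0, g 2 2 false 0, g 0 2 false 0, g 1 1 false 0, g 2 0 false 0, g 1 2 false 0, g 1 0 false 0, g 2 1 false 0])]

/-- `h` is a product of an element of `li` and an element of `lj`. -/
def P (h : G72) (li lj : List G72) : Prop := ∃ a ∈ li, ∃ b ∈ lj, a * b = h

instance (h li lj) : Decidable (P h li lj) := by unfold P; infer_instance

set_option maxRecDepth 40000 in
theorem classes_spec : ∀ p ∈ reps, ∀ x : G72, x ∈ p.2 ↔ IsConj p.1 x := by decide

theorem complete' : ∀ x : G72, ∃ p ∈ reps, x ∈ p.2 := by decide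

theorem complete (x : G72) : ∃ p ∈ reps, IsConj p.1 x := by
  obtain ⟨p, hp, hx⟩ := complete' x
  exact ⟨p, hp, (classes_spec p hp x).1 hx⟩

theorem core : ∀ p ∈ reps, ∀ q ∈ reps, ¬ IsConj p.1 q.1 →
    ∃ r ∈ reps, P p.1 q.2 r.2 ∧ ∀ r' ∈ reps, P p.1 q.2 r'.2 → IsConj r.1 r'.1 := by decide

theorem mem_carrier_iff {w x z : G72} (hx : IsConj w x) :
    z ∈ (ConjClasses.mk x).carrier ↔ IsConj w z := by
  rw [ConjClasses.mem_carrier_iff_mk_eq, ConjClasses.mk_eq_mk_iff_isConj]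
  exact ⟨fun h => hx.trans h.symm, fun h => (hx.symm.trans h).symm⟩

theorem bridge : ∀ p ∈ reps, ∀ q ∈ reps, ∀ r ∈ reps, ∀ x y z : G72,
    IsConj p.1 x → IsConj q.1 y → IsConj r.1 z →
    (((ConjClasses.mk x).carrier ∩
      ((ConjClasses.mk y).carrier * (ConjClasses.mk z).carrier)).Nonempty ↔ P p.1 q.2 r.2) := by
  intro p hp q hq r hr x y z hx hy hz
  constructor
  · rintro ⟨w, hw1, hw2⟩
    rw [Set.mem_mul] at hw2
    obtain ⟨a, ha, b, hb, hab⟩ := hw2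
    rw [mem_carrier_iff hx] at hw1
    rw [mem_carrier_iff hy] at ha
    rw [mem_carrier_iff hz] at hb
    obtain ⟨c, hc⟩ := isConj_iff.1 hw1
    refine ⟨c⁻¹ * a * c, ?_, c⁻¹ * b * c, ?_, ?_⟩
    · exact (classes_spec q hq _).2 (ha.trans (isConj_iff.2 ⟨c⁻¹, by group⟩))
    · exact (classes_spec r hr _).2 (hb.trans (isConj_iff.2 ⟨c⁻¹, by group⟩))
    · have habp : a * b = c * p.1 * c⁻¹ := hab.trans hc.symm
      calc (c⁻¹ * a * c) * (c⁻¹ * b * c) = c⁻¹ * (a * b) * c := by group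
        _ = p.1 := by rw [habp]; group
  · rintro ⟨a, ha, b, hb, hab⟩
    refine ⟨p.1, (mem_carrier_iff hx).2 (IsConj.refl _), Set.mem_mul.2
      ⟨a, (mem_carrier_iff hy).2 ((classes_spec q hq a).1 ha),
       b, (mem_carrier_iff hz).2 ((classes_spec r hr b).1 hb), hab⟩⟩

/-- The Frobenius group `G₇₂ = (ℤ/3ℤ)² ⋊ Q₈` of order 72 satisfies the unique intersection
number condition. -/
theorem g72_uniqueIntersectionNumberCondition :
    UniqueIntersectionNumberCondition G72 := by
  intro Ch Ci hne
  obtain ⟨h, rfl⟩ := ConjClasses.mk_surjective Ch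
  obtain ⟨i, rfl⟩ := ConjClasses.mk_surjective Ci
  obtain ⟨p, hp, hph⟩ := complete h
  obtain ⟨q, hq, hqi⟩ := complete i
  have hpq : ¬ IsConj p.1 q.1 := by
    intro hc
    exact hne (by
      rw [ConjClasses.mk_eq_mk_iff_isConj]
      exact (hph.symm.trans hc).trans hqi)
  obtain ⟨r, hr, hP, huniq⟩ := core p hp q hq hpq
  refine ⟨ConjClasses.mk r.1, ?_, ?_⟩
  · exact (bridge p hp q hq r hr h i r.1 hph hqi (IsConj.refl _)).2 hP
  · intro Cj' hCj'
    obtain ⟨j, rfl⟩ := ConjClasses.mk_surjective Cj'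
    obtain ⟨r', hr', hrj⟩ := complete j
    have hP' := (bridge p hp q hq r' hr' h i j hph hqi hrj).1 hCj'
    have := huniq r' hr' hP'
    rw [ConjClasses.mk_eq_mk_iff_isConj]
    exact (this.trans hrj).symm
end

section
/- Let G be a finite Camina group whose derived subgroup G' is the union of exactly two conjugacy classes (necessarily {e} and G' ∖ {e}). Then G satisfies the unique intersection number condition: for every pair of distinct conjugacy classes C_h ≠ C_i of G there is exactly one conjugacy class C_j with C_h ∩ C_iC_j ≠ ∅. -/
open Pointwise

open scoped commutatorElement in
/-- If `a` and `b` are conjugate then `a⁻¹ * b` lies in the commutator subgroup. -/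
private lemma inv_mul_mem_commutator {G : Type*} [Group G] {a b : G} (h : IsConj a b) :
    a⁻¹ * b ∈ commutator G := by
  obtain ⟨c, hc⟩ := isConj_iff.mp h
  have : a⁻¹ * b = ⁅a⁻¹, c⁆ := by rw [← hc]; group
  rw [this, commutator_def]
  exact Subgroup.commutator_mem_commutator (Subgroup.mem_top _) (Subgroup.mem_top _)

/-- Key lemma: in a Camina group all of whose nontrivial commutator-subgroup elements are
conjugate, if `h` and `i` are not conjugate then `i⁻¹ * h` and `i'⁻¹ * h'` are conjugate for
any conjugates `h'` of `h` and `i'` of `i`. -/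
private lemma key_lemma {G : Type*} [Group G]
    (hG : ∀ g : G, g ∉ commutator G → conjugatesOf g = g • (commutator G : Set G))
    (hN2 : ∀ x ∈ commutator G, ∀ y ∈ commutator G, x ≠ 1 → y ≠ 1 → IsConj x y)
    {h i h' i' : G} (hh : IsConj h h') (hi : IsConj i i') (hne : ¬ IsConj h i) :
    IsConj (i⁻¹ * h) (i'⁻¹ * h') := by
  have hN : (commutator G).Normal := inferInstance
  have hmem : (i⁻¹ * h)⁻¹ * (i'⁻¹ * h') ∈ commutator G := by
    have e : (i⁻¹ * h)⁻¹ * (i'⁻¹ * h') =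
        (h⁻¹ * (i * (i⁻¹ * i')⁻¹ * i⁻¹) * (h⁻¹)⁻¹) * (h⁻¹ * h') := by group
    rw [e]
    exact mul_mem (hN.conj_mem _ (hN.conj_mem _ (inv_mem (inv_mul_mem_commutator hi)) i) h⁻¹)
      (inv_mul_mem_commutator hh)
  by_cases hj : i⁻¹ * h ∈ commutator G
  · have hj' : i'⁻¹ * h' ∈ commutator G := by
      have e : i'⁻¹ * h' = (i⁻¹ * h) * ((i⁻¹ * h)⁻¹ * (i'⁻¹ * h')) := by group
      rw [e]; exact mul_mem hj hmem
    have h1 : i⁻¹ * h ≠ 1 := fun e => hne (inv_mul_eq_one.mp e ▸ IsConj.refl h)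
    have h1' : i'⁻¹ * h' ≠ 1 := fun e =>
      hne (hh.trans ((inv_mul_eq_one.mp e) ▸ hi.symm))
    exact hN2 _ hj _ hj' h1 h1'
  · have : i'⁻¹ * h' ∈ conjugatesOf (i⁻¹ * h) := by
      rw [hG _ hj]
      exact ⟨(i⁻¹ * h)⁻¹ * (i'⁻¹ * h'), hmem, by simp only [smul_eq_mul]; group⟩
    exact this

/-- If the commutator subgroup is a union of two conjugacy classes, then any two nontrivial
elements of it are conjugate. -/
private lemma two_classes_aux {G : Type*} [Group G]
    (h2 : ∃ C₁ C₂ : ConjClasses G, C₁ ≠ C₂ ∧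
      (commutator G : Set G) = C₁.carrier ∪ C₂.carrier) :
    ∀ x ∈ commutator G, ∀ y ∈ commutator G, x ≠ 1 → y ≠ 1 → IsConj x y := by
  obtain ⟨C₁, C₂, -, hU⟩ := h2
  have triv : ∀ C : ConjClasses G, (1:G) ∈ C.carrier → ∀ z ∈ C.carrier, z = 1 := by
    intro C h1 z hz
    rw [ConjClasses.mem_carrier_iff_mk_eq] at h1 hz
    exact (isConj_one_right.mp (ConjClasses.mk_eq_mk_iff_isConj.mp (h1.trans hz.symm)))
  have main : ∀ A B : ConjClasses G,
      (commutator G : Set G) = A.carrier ∪ B.carrier → (1:G) ∈ A.carrier →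
      ∀ x ∈ commutator G, ∀ y ∈ commutator G, x ≠ 1 → y ≠ 1 → IsConj x y := by
    intro A B hU h1 x hx y hy hx1 hy1
    have hx' : x ∈ A.carrier ∪ B.carrier := hU ▸ hx
    have hy' : y ∈ A.carrier ∪ B.carrier := hU ▸ hy
    have hxB : x ∈ B.carrier := hx'.resolve_left (fun h => hx1 (triv A h1 x h))
    have hyB : y ∈ B.carrier := hy'.resolve_left (fun h => hy1 (triv A h1 y h))
    rw [ConjClasses.mem_carrier_iff_mk_eq] at hxB hyB
    exact ConjClasses.mk_eq_mk_iff_isConj.mp (hxB.trans hyB.symm)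
  have h1 : (1:G) ∈ C₁.carrier ∪ C₂.carrier := hU ▸ one_mem _
  rcases h1 with h1 | h1
  · exact main C₁ C₂ hU h1
  · exact main C₂ C₁ (by rw [hU, Set.union_comm]) h1

/-- A group `G` is a *Camina group* if the conjugacy class of every element `g` outside the
derived subgroup `G' = [G,G]` equals the coset `gG'`. -/
def IsCaminaGroup (G : Type*) [Group G] : Prop :=
  ∀ g : G, g ∉ commutator G → conjugatesOf g = g • (commutator G : Set G)

/-- A finite Camina group whose derived subgroup is the union of exactly two conjugacy
classes satisfies the unique intersection number condition. -/
theorem camina_two_classes_uniqueIntersectionNumberCondition (G : Type*) [Group G] [Finite G]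
    (hG : IsCaminaGroup G)
    (h2 : ∃ C₁ C₂ : ConjClasses G, C₁ ≠ C₂ ∧
      (commutator G : Set G) = C₁.carrier ∪ C₂.carrier) :
    UniqueIntersectionNumberCondition G := by
  have hN2 := two_classes_aux h2
  intro Ch Ci hne
  obtain ⟨h, rfl⟩ := ConjClasses.exists_rep Ch
  obtain ⟨i, rfl⟩ := ConjClasses.exists_rep Ci
  have hne' : ¬ IsConj h i := fun hc => hne (ConjClasses.mk_eq_mk_iff_isConj.mpr hc)
  refine ⟨ConjClasses.mk (i⁻¹ * h), ⟨h, ?_, ?_⟩, ?_⟩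
  · exact ConjClasses.mem_carrier_iff_mk_eq.mpr rfl
  · exact ⟨i, ConjClasses.mem_carrier_iff_mk_eq.mpr rfl,
      i⁻¹ * h, ConjClasses.mem_carrier_iff_mk_eq.mpr rfl, by group⟩
  · rintro Cj ⟨x, hx1, hx2⟩
    obtain ⟨a, ha, b, hb, rfl⟩ := hx2
    rw [ConjClasses.mem_carrier_iff_mk_eq] at hx1 ha hb
    have hh' : IsConj h (a * b) := ConjClasses.mk_eq_mk_iff_isConj.mp hx1.symm
    have hi' : IsConj i a := ConjClasses.mk_eq_mk_iff_isConj.mp ha.symm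
    have hconj := key_lemma hG hN2 hh' hi' hne'
    rw [← hb]
    have e : a⁻¹ * (a * b) = b := by group
    rw [e] at hconj
    exact (ConjClasses.mk_eq_mk_iff_isConj.mpr hconj).symm
end

section
/- Let G be a finite group satisfying the unique intersection number condition. Then for all x, y ∈ G whose conjugacy classes satisfy x^G ≠ (y⁻¹)^G, the setwise product of conjugacy classes x^G y^G = {ab : a ∈ x^G, b ∈ y^G} equals the single conjugacy class (xy)^G. -/
/-!
Let `a ∈ x^G` and `b ∈ y^G`. Since `a = b⁻¹ * (b * a)` and `b * a` is conjugate to `a * b`, the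
class `x^G` meets `(y⁻¹)^G (ab)^G`; it also meets `(y⁻¹)^G (xy)^G`. When `x^G ≠ (y⁻¹)^G` the
unique intersection number condition forces `(ab)^G = (xy)^G`, so `x^G y^G ⊆ (xy)^G`. The
reverse inclusion holds in every group: `c(xy)c⁻¹ = (cxc⁻¹)(cyc⁻¹)`.
-/

open Pointwise

section Group

variable {G : Type*} [Group G]

theorem conjugatesOf_mul_subset_mul (x y : G) :
    conjugatesOf (x * y) ⊆ conjugatesOf x * conjugatesOf y := by
  intro z hz
  obtain ⟨c, rfl⟩ := isConj_iff.mp hz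
  exact ⟨c * x * c⁻¹, isConj_iff.mpr ⟨c, rfl⟩, c * y * c⁻¹, isConj_iff.mpr ⟨c, rfl⟩, by group⟩

theorem IsConj.inv {a b : G} (h : IsConj a b) : IsConj a⁻¹ b⁻¹ := by
  obtain ⟨c, rfl⟩ := isConj_iff.mp h
  exact isConj_iff.mpr ⟨c, by group⟩

theorem isConj_mul_comm (a b : G) : IsConj (a * b) (b * a) :=
  isConj_iff.mpr ⟨b, by group⟩

theorem ConjClasses.carrier_mk_inter_mk_inv_mul_mk_mul_nonempty (a b : G) :
    ((ConjClasses.mk a).carrier ∩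
      ((ConjClasses.mk b⁻¹).carrier * (ConjClasses.mk (a * b)).carrier)).Nonempty :=
  ⟨a, ConjClasses.mem_carrier_mk, b⁻¹, ConjClasses.mem_carrier_mk, b * a,
    isConj_mul_comm a b, inv_mul_cancel_left b a⟩

theorem UniqueIntersectionNumberCondition.mk_mul_eq (hG : UniqueIntersectionNumberCondition G)
    {x y a b : G} (hne : ConjClasses.mk x ≠ ConjClasses.mk y⁻¹) (ha : IsConj x a)
    (hb : IsConj y b) : ConjClasses.mk (a * b) = ConjClasses.mk (x * y) := by
  obtain ⟨_, -, huniq⟩ := hG _ _ hne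
  have hab := ConjClasses.carrier_mk_inter_mk_inv_mul_mk_mul_nonempty a b
  rw [ConjClasses.mk_eq_mk_iff_isConj.mpr ha.symm,
    ConjClasses.mk_eq_mk_iff_isConj.mpr hb.inv.symm] at hab
  exact (huniq _ hab).trans
    (huniq _ (ConjClasses.carrier_mk_inter_mk_inv_mul_mk_mul_nonempty x y)).symm

end Group

theorem uniqueIntersectionNumberCondition_class_mul_general (G : Type*) [Group G]
    (hG : UniqueIntersectionNumberCondition G) (x y : G)
    (hxy : conjugatesOf x ≠ conjugatesOf (y⁻¹)) :
    conjugatesOf x * conjugatesOf y = conjugatesOf (x * y) := by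
  have hne : ConjClasses.mk x ≠ ConjClasses.mk y⁻¹ := fun h =>
    hxy (isConj_iff_conjugatesOf_eq.mp (ConjClasses.mk_eq_mk_iff_isConj.mp h))
  refine Set.Subset.antisymm ?_ (conjugatesOf_mul_subset_mul x y)
  rintro _ ⟨a, ha, b, hb, rfl⟩
  exact ConjClasses.mk_eq_mk_iff_isConj.mp (hG.mk_mul_eq hne ha hb).symm

/-- If a finite group `G` satisfies the unique intersection number condition, then for all
`x, y ∈ G` with `x^G ≠ (y⁻¹)^G`, the setwise product of conjugacy classes `x^G y^G` is the
single conjugacy class `(xy)^G`. -/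
theorem uniqueIntersectionNumberCondition_class_mul (G : Type*) [Group G] [Finite G]
    (hG : UniqueIntersectionNumberCondition G) (x y : G)
    (hxy : conjugatesOf x ≠ conjugatesOf (y⁻¹)) :
    conjugatesOf x * conjugatesOf y = conjugatesOf (x * y) :=
  uniqueIntersectionNumberCondition_class_mul_general G hG x y hxy
end

section
/- Let G be a finite group with normal subgroups N ≤ M ≤ G such that: the conjugacy class of every x ∈ G ∖ M equals the coset xM; the conjugacy class of every x ∈ M ∖ N equals the coset xN; and the conjugacy class of every x ∈ N is the singleton {x}. Then G satisfies the unique intersection number condition: for every pair of distinct conjugacy classes C_h ≠ C_i of G there is exactly one conjugacy class C_j with C_h ∩ C_iC_j ≠ ∅. -/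
/-!
Every conjugacy class of such a group is a coset `x • L x` of a normal subgroup `L x ∈ {⊥, N, M}`,
and these subgroups satisfy `x ∉ L y → L y ≤ L x`. For non-conjugate `a` and `b` this gives
`L a, L b ≤ L (b⁻¹ * a)` (as `b⁻¹ * a ∉ L a` and `b⁻¹ * a ∉ L b`), so every element of
`(b • L b)⁻¹ * (a • L a)` is conjugate to `b⁻¹ * a`: the class of `b⁻¹ * a` is the only `C_j`
with `C_a ∩ C_b C_j ≠ ∅`.
-/

open Pointwise

section CosetClasses

variable {G : Type*} [Group G] {L : G → Subgroup G}

lemma mem_carrier_mk_iff_inv_mul_mem (hL : ∀ x, conjugatesOf x = x • (L x : Set G)) (b c : G) :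
    c ∈ (ConjClasses.mk b).carrier ↔ b⁻¹ * c ∈ L b := by
  rw [ConjClasses.mem_carrier_iff_mk_eq, ConjClasses.mk_eq_mk_iff_isConj, isConj_comm,
    ← SetLike.mem_coe, ← mem_leftCoset_iff, ← hL]
  rfl

lemma inv_mul_notMem_of_mk_ne (hL : ∀ x, conjugatesOf x = x • (L x : Set G)) {a b : G}
    (hne : ConjClasses.mk a ≠ ConjClasses.mk b) : b⁻¹ * a ∉ L b := fun h ↦
  hne <| ConjClasses.mem_carrier_iff_mk_eq.mp <| (mem_carrier_mk_iff_inv_mul_mem hL b a).mpr h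

lemma conj_mul_mem {K : Subgroup G} [K.Normal] (g : G) {k l : G} (hk : k ∈ K) (hl : l ∈ K) :
    g⁻¹ * k * g * l ∈ K := by
  simpa using mul_mem (Subgroup.Normal.conj_mem ‹_› k hk g⁻¹) hl

theorem uniqueIntersectionNumberCondition_of_conjugatesOf_eq_smul (hnormal : ∀ x, (L x).Normal)
    (hL : ∀ x, conjugatesOf x = x • (L x : Set G)) (hle : ∀ x y, x ∉ L y → L y ≤ L x) :
    UniqueIntersectionNumberCondition G := by
  rintro Ch Ci hne
  obtain ⟨a, rfl⟩ := ConjClasses.exists_rep Ch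
  obtain ⟨b, rfl⟩ := ConjClasses.exists_rep Ci
  refine ⟨ConjClasses.mk (b⁻¹ * a), ⟨a, ConjClasses.mem_carrier_mk, b, ConjClasses.mem_carrier_mk,
    b⁻¹ * a, ConjClasses.mem_carrier_mk, mul_inv_cancel_left b a⟩, ?_⟩
  rintro Cj ⟨_, hcd, c, hc, d, hd, rfl⟩
  have hLa : L a ≤ L (b⁻¹ * a) := hle _ a fun h ↦
    inv_mul_notMem_of_mk_ne hL hne.symm (by simpa using inv_mem h)
  have hLb : L b ≤ L (b⁻¹ * a) := hle _ b (inv_mul_notMem_of_mk_ne hL hne)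
  rw [← ConjClasses.mem_carrier_iff_mk_eq.mp hd, ← ConjClasses.mem_carrier_iff_mk_eq,
    mem_carrier_mk_iff_inv_mul_mem hL]
  rw [mem_carrier_mk_iff_inv_mul_mem hL] at hc hcd
  have := hnormal (b⁻¹ * a)
  -- `c = b * k` and `c * d = a * l` with `k ∈ L b`, `l ∈ L a`, and `d = k⁻¹ * (b⁻¹ * a) * l`.
  convert conj_mul_mem (b⁻¹ * a) (hLb (inv_mem hc)) (hLa hcd) using 1
  group

end CosetClasses

section ThreeLevel

variable {G : Type*} [Group G] (N M : Subgroup G)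

open Classical in
noncomputable def threeLevelSubgroup (x : G) : Subgroup G :=
  if x ∈ N then ⊥ else if x ∈ M then N else M

instance threeLevelSubgroup_normal [N.Normal] [M.Normal] (x : G) :
    (threeLevelSubgroup N M x).Normal := by
  unfold threeLevelSubgroup
  split_ifs <;> infer_instance

variable {N M}

lemma conjugatesOf_eq_smul_threeLevelSubgroup
    (hM : ∀ x : G, x ∉ M → conjugatesOf x = x • (M : Set G))
    (hN : ∀ x ∈ M, x ∉ N → conjugatesOf x = x • (N : Set G))
    (hZ : ∀ x ∈ N, conjugatesOf x = {x}) (x : G) :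
    conjugatesOf x = x • (threeLevelSubgroup N M x : Set G) := by
  unfold threeLevelSubgroup
  split_ifs with hxN hxM
  · rw [hZ x hxN, Subgroup.coe_bot, Set.smul_set_singleton, smul_eq_mul, mul_one]
  · exact hN x hxM hxN
  · exact hM x hxM

lemma threeLevelSubgroup_le_of_notMem (hNM : N ≤ M) {x y : G}
    (h : x ∉ threeLevelSubgroup N M y) : threeLevelSubgroup N M y ≤ threeLevelSubgroup N M x := by
  unfold threeLevelSubgroup at *
  split_ifs at * <;> simp_all [SetLike.le_def]

end ThreeLevel

theorem three_level_uniqueIntersectionNumberCondition_general (G : Type*) [Group G]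
    (N M : Subgroup G) [N.Normal] [M.Normal] (hNM : N ≤ M)
    (hM : ∀ x : G, x ∉ M → conjugatesOf x = x • (M : Set G))
    (hN : ∀ x ∈ M, x ∉ N → conjugatesOf x = x • (N : Set G))
    (hZ : ∀ x ∈ N, conjugatesOf x = {x}) :
    UniqueIntersectionNumberCondition G :=
  uniqueIntersectionNumberCondition_of_conjugatesOf_eq_smul (threeLevelSubgroup_normal N M)
    (conjugatesOf_eq_smul_threeLevelSubgroup hM hN hZ)
    fun _ _ ↦ threeLevelSubgroup_le_of_notMem hNM

/-- Let `G` be a finite group with normal subgroups `N ≤ M ≤ G` such that the conjugacy class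
of every `x ∈ G ∖ M` is `xM`, the conjugacy class of every `x ∈ M ∖ N` is `xN`, and every
element of `N` is central. Then `G` satisfies the unique intersection number condition. -/
theorem three_level_uniqueIntersectionNumberCondition (G : Type*) [Group G] [Finite G]
    (N M : Subgroup G) [N.Normal] [M.Normal] (hNM : N ≤ M)
    (hM : ∀ x : G, x ∉ M → conjugatesOf x = x • (M : Set G))
    (hN : ∀ x ∈ M, x ∉ N → conjugatesOf x = x • (N : Set G))
    (hZ : ∀ x ∈ N, conjugatesOf x = {x}) :
    UniqueIntersectionNumberCondition G :=
  three_level_uniqueIntersectionNumberCondition_general G N M hNM hM hN hZ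
end
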